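/- Let σ², b, p be as in the invariant-density setting, with p the invariant density, and let h : ℝ → ℝ be bounded measurable with ∫_ℝ h(y)p(y) dy = 0. Then w(z) = (2/(σ²(z)p(z)))·∫_{−∞}^z h(y)p(y) dy solves the first-order ODE (1/2)·σ²(z)·w'(z) + b(z)·w(z) = h(z) for a.e. z. -/

import Mathlib

open MeasureTheory Set

lemma primitive_hasDerivAt_of_nonneg (g : ℝ → ℝ) (hm : Measurable g)
    (hg : Integrable g) (h0 : ∀ x, 0 ≤ g x) :
    ∀ᵐ x, HasDerivAt (fun z => ∫ y in Iic z, g y) (g x) x := by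
  set F : ℝ → ℝ := fun z => ∫ y in Iic z, g y with hFdef
  have hmono : Monotone F := fun a c hac =>
    setIntegral_mono_set hg.integrableOn (Filter.Eventually.of_forall h0)
      (HasSubset.Subset.eventuallyLE (Iic_subset_Iic.2 hac))
  have hcont : Continuous F := by
    have h1 : Continuous fun z => ∫ t in (0:ℝ)..z, g t :=
      intervalIntegral.continuous_primitive (fun a b => hg.intervalIntegrable) 0
    have h2 : ∀ z, F z = F 0 + ∫ t in (0:ℝ)..z, g t := by
      intro z
      have := intervalIntegral.integral_Iic_sub_Iic (a := 0) (b := z)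
        hg.integrableOn hg.integrableOn
      simp only [hFdef]
      linarith
    rw [show F = (fun z => F 0 + ∫ t in (0:ℝ)..z, g t) from funext h2]
    exact continuous_const.add h1
  set S : StieltjesFunction ℝ := ⟨F, hmono, fun x => hcont.continuousWithinAt⟩ with hS
  have hmeas : S.measure = volume.withDensity (fun x => ENNReal.ofReal (g x)) := by
    refine MeasureTheory.Measure.ext_of_Ioc _ _ (fun a c hac => ?_)
    rw [S.measure_Ioc, withDensity_apply _ measurableSet_Ioc]
    have : F c - F a = ∫ y in Ioc a c, g y := by
      rw [← intervalIntegral.integral_of_le hac.le,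
        ← intervalIntegral.integral_Iic_sub_Iic hg.integrableOn hg.integrableOn]
    rw [this, MeasureTheory.ofReal_integral_eq_lintegral_ofReal hg.integrableOn
      (Filter.Eventually.of_forall fun x => h0 x)]
  have hrn := MeasureTheory.Measure.rnDeriv_withDensity (volume : Measure ℝ)
    (hm.ennreal_ofReal)
  rw [← hmeas] at hrn
  filter_upwards [S.ae_hasDerivAt, hrn] with x hx hx2
  rw [hx2, ENNReal.toReal_ofReal (h0 x)] at hx
  exact hx

lemma primitive_hasDerivAt (g : ℝ → ℝ) (hm : Measurable g) (hg : Integrable g) :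
    ∀ᵐ x, HasDerivAt (fun z => ∫ y in Iic z, g y) (g x) x := by
  have h1 := primitive_hasDerivAt_of_nonneg (fun x => max (g x) 0)
    (hm.max measurable_const) hg.pos_part (fun x => le_max_right _ _)
  have h2 := primitive_hasDerivAt_of_nonneg (fun x => max (-g x) 0)
    (hm.neg.max measurable_const) hg.neg.pos_part (fun x => le_max_right _ _)
  filter_upwards [h1, h2] with x hx1 hx2
  have hi1 : Integrable (fun y => max (g y) 0) volume := hg.pos_part
  have hi2 : Integrable (fun y => max (-g y) 0) volume := hg.neg.pos_part
  have heq : (fun z => ∫ y in Iic z, g y)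
      = fun z => (∫ y in Iic z, max (g y) 0) - ∫ y in Iic z, max (-g y) 0 := by
    funext z
    rw [← integral_sub hi1.integrableOn hi2.integrableOn]
    exact integral_congr_ae (Filter.Eventually.of_forall fun y =>
      (max_zero_sub_eq_self (g y)).symm)
  rw [heq]
  have := hx1.sub hx2
  rwa [max_zero_sub_eq_self (g x)] at this

/-- Lemma A.5, equation (8.13): if `p > 0` is the invariant density (satisfying the
stationary equation `(1/2)(σ²p)' = b·p`), `h` is bounded measurable with
`∫ h·p = 0`, then `w(z) = (2/(σ²(z)p(z)))·∫_{−∞}^z h(y)p(y) dy` solves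
`(1/2)·σ²(z)·w'(z) + b(z)·w(z) = h(z)` for a.e. `z`. -/
theorem poisson_equation_solution (b σ p h w : ℝ → ℝ)
    (hppos : ∀ z, 0 < p z) (hσpos : ∀ z, 0 < σ z)
    (hFP : ∀ z, HasDerivAt (fun y => (σ y) ^ 2 * p y) (2 * b z * p z) z)
    (hhm : Measurable h) (hhb : ∃ K, ∀ z, |h z| ≤ K)
    (hint : Integrable fun y => h y * p y)
    (hmean : ∫ y, h y * p y = 0)
    (hw : ∀ z, w z = 2 / ((σ z) ^ 2 * p z) * ∫ y in Iic z, h y * p y) :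
    ∀ᵐ z : ℝ, ∃ d, HasDerivAt w d z ∧ (1 / 2) * (σ z) ^ 2 * d + b z * w z = h z := by
  set f : ℝ → ℝ := fun y => h y * p y with hf
  set g : ℝ → ℝ := hint.1.mk f with hgdef
  have hgm : Measurable g := hint.1.measurable_mk
  have hgae : f =ᵐ[volume] g := hint.1.ae_eq_mk
  have hgint : Integrable g := hint.congr hgae
  have hH : ∀ z, (∫ y in Iic z, h y * p y) = ∫ y in Iic z, g y := fun z =>
    integral_congr_ae (ae_restrict_of_ae hgae)
  have hweq : w = fun z => (2 * ∫ y in Iic z, g y) / ((σ z) ^ 2 * p z) := by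
    funext z
    rw [hw z, hH z]
    ring
  filter_upwards [primitive_hasDerivAt g hgm hgint, hgae] with x hx hfg
  have hA : (σ x) ^ 2 * p x ≠ 0 :=
    mul_ne_zero (pow_ne_zero 2 (hσpos x).ne') (hppos x).ne'
  have hnum : HasDerivAt (fun z => 2 * ∫ y in Iic z, g y) (2 * g x) x := hx.const_mul 2
  have hd : HasDerivAt (fun z => (2 * ∫ y in Iic z, g y) / ((σ z) ^ 2 * p z)) _ x :=
    hnum.div (hFP x) hA
  rw [← hweq] at hd
  refine ⟨_, hd, ?_⟩
  rw [hweq]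
  simp only
  rw [← hfg]
  field_simp
  simp only [hf]
  field_simp [(hσpos x).ne', (hppos x).ne']
  ring
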